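/- Let (Y_i)_{0≤i<n} and (Z_i)_{0≤i<n} be sequences of n complex numbers, each of whose terms lies in {1, ω, ω²}. Then |Σ_{i=0}^{n−1} (Y_i − Z_i)|² is an integer, and it is congruent to 0 modulo 9 if ∏_{i=0}^{n−1} Y_i = ∏_{i=0}^{n−1} Z_i, and congruent to 3 modulo 9 otherwise. -/

import Mathlib

open scoped BigOperators

/-!
Every cube root of unity is `p + q ω` with `p, q ∈ ℤ`, `p + q ≡ 1 (mod 3)`, and equals `ω ^ q`.
Summing, `∑ (Y i - Z i) = P + Q ω` with `3 ∣ P + Q`, and `∏ Y = ∏ Z` exactly when `3 ∣ Q`.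
Its squared modulus is `P² - P Q + Q²`, which for `P = 3 m - Q` equals `9 (m² - m Q) + 3 Q²`.
-/

noncomputable def ω : ℂ := Complex.exp (2 * Real.pi * Complex.I / 3)

theorem isPrimitiveRoot_omega : IsPrimitiveRoot ω 3 := by
  simpa [ω] using Complex.isPrimitiveRoot_exp 3 three_ne_zero

theorem omega_pow_three : ω ^ 3 = 1 := isPrimitiveRoot_omega.pow_eq_one

theorem omega_ne_zero : ω ≠ 0 := isPrimitiveRoot_omega.ne_zero three_ne_zero

theorem one_add_omega_add_omega_sq : 1 + ω + ω ^ 2 = 0 := by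
  simpa [Finset.sum_range_succ] using isPrimitiveRoot_omega.geom_sum_eq_zero (by norm_num)

theorem conj_omega : starRingEnd ℂ ω = ω ^ 2 := by
  refine mul_left_cancel₀ omega_ne_zero ?_
  rw [Complex.mul_conj, Complex.normSq_eq_norm_sq, isPrimitiveRoot_omega.norm'_eq_one three_ne_zero,
    ← pow_succ', omega_pow_three]
  simp

theorem normSq_intCast_add_intCast_mul_omega (p q : ℤ) :
    Complex.normSq (p + q * ω) = ((p ^ 2 - p * q + q ^ 2 : ℤ) : ℝ) := by
  apply Complex.ofReal_injective
  rw [← Complex.mul_conj]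
  simp only [map_add, map_mul, map_intCast, conj_omega]
  push_cast
  linear_combination (p * q : ℂ) * one_add_omega_add_omega_sq + (q : ℂ) ^ 2 * omega_pow_three

theorem IsPrimitiveRoot.zpow_eq_zpow_iff {G₀ : Type*} [CommGroupWithZero G₀] {ζ : G₀} {k : ℕ}
    (h : IsPrimitiveRoot ζ k) (hk : k ≠ 0) (a b : ℤ) : ζ ^ a = ζ ^ b ↔ (k : ℤ) ∣ a - b := by
  have hζ : ζ ≠ 0 := h.ne_zero hk
  rw [← h.zpow_eq_one_iff_dvd, zpow_sub₀ hζ, div_eq_one_iff_eq (zpow_ne_zero _ hζ)]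

theorem exists_eisenstein_coords_of_mem_cubeRoots {x : ℂ} (hx : x ∈ ({1, ω, ω ^ 2} : Set ℂ)) :
    ∃ p q : ℤ, x = p + q * ω ∧ 3 ∣ p + q - 1 ∧ x = ω ^ q := by
  rcases hx with rfl | rfl | rfl
  · exact ⟨1, 0, by simp, by decide, by simp⟩
  · exact ⟨0, 1, by simp, by decide, by simp⟩
  · refine ⟨-1, -1, ?_, by decide, ?_⟩
    · push_cast
      linear_combination one_add_omega_add_omega_sq
    · rw [zpow_neg_one]
      exact eq_inv_of_mul_eq_one_left (by rw [← pow_succ, omega_pow_three])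

theorem exists_eisenstein_coords_sum_prod {ι : Type*} (s : Finset ι) (f : ι → ℂ)
    (hf : ∀ i ∈ s, f i ∈ ({1, ω, ω ^ 2} : Set ℂ)) :
    ∃ p q : ℤ, ∑ i ∈ s, f i = p + q * ω ∧ 3 ∣ p + q - s.card ∧ ∏ i ∈ s, f i = ω ^ q := by
  classical
  induction s using Finset.induction_on with
  | empty => exact ⟨0, 0, by simp, by simp, by simp⟩
  | insert a s ha ih =>
    obtain ⟨p₀, q₀, hsum₀, hdvd₀, hpow₀⟩ :=
      exists_eisenstein_coords_of_mem_cubeRoots (hf a (Finset.mem_insert_self a s))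
    obtain ⟨p, q, hsum, hdvd, hprod⟩ := ih fun i hi => hf i (Finset.mem_insert_of_mem hi)
    refine ⟨p₀ + p, q₀ + q, ?_, ?_, ?_⟩
    · rw [Finset.sum_insert ha, hsum₀, hsum]
      push_cast
      ring
    · rw [Finset.card_insert_of_notMem ha]
      push_cast
      omega
    · rw [Finset.prod_insert ha, hpow₀, hprod, zpow_add₀ omega_ne_zero]

theorem sq_sub_mul_add_sq_emod_nine {P Q : ℤ} (h : 3 ∣ P + Q) :
    (P ^ 2 - P * Q + Q ^ 2) % 9 = if 3 ∣ Q then 0 else 3 := by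
  obtain ⟨m, hm⟩ := h
  obtain rfl : P = 3 * m - Q := by omega
  obtain ⟨t, r, hr, rfl⟩ : ∃ t r, (r = 0 ∨ r = 1 ∨ r = 2) ∧ Q = 3 * t + r :=
    ⟨Q / 3, Q % 3, by omega, by omega⟩
  rw [show (3 * m - (3 * t + r)) ^ 2 - (3 * m - (3 * t + r)) * (3 * t + r) + (3 * t + r) ^ 2
      = 3 * r ^ 2 + 9 * (m ^ 2 - m * (3 * t + r) + 3 * t ^ 2 + 2 * t * r) by ring,
    Int.add_mul_emod_self_left]
  rcases hr with rfl | rfl | rfl <;> split_ifs <;> omega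

/-- If `(Y_i)` and `(Z_i)` are length-`n` sequences of cube roots of unity, then
`|Σ (Y_i − Z_i)|²` is an integer, congruent to `0` mod `9` if `∏ Y_i = ∏ Z_i`
and congruent to `3` mod `9` otherwise. -/
theorem abs_sq_diff_of_cube_roots (n : ℕ) (Y Z : ℕ → ℂ)
    (hY : ∀ i < n, Y i ∈ ({1, ω, ω ^ 2} : Set ℂ))
    (hZ : ∀ i < n, Z i ∈ ({1, ω, ω ^ 2} : Set ℂ)) :
    ∃ k : ℤ,
      (‖∑ i ∈ Finset.range n, (Y i - Z i)‖) ^ 2 = (k : ℝ) ∧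
      ((∏ i ∈ Finset.range n, Y i) = (∏ i ∈ Finset.range n, Z i) → k % 9 = 0) ∧
      ((∏ i ∈ Finset.range n, Y i) ≠ (∏ i ∈ Finset.range n, Z i) → k % 9 = 3) := by
  obtain ⟨pY, qY, hsumY, hdvdY, hprodY⟩ :=
    exists_eisenstein_coords_sum_prod (Finset.range n) Y fun i hi => hY i (Finset.mem_range.mp hi)
  obtain ⟨pZ, qZ, hsumZ, hdvdZ, hprodZ⟩ :=
    exists_eisenstein_coords_sum_prod (Finset.range n) Z fun i hi => hZ i (Finset.mem_range.mp hi)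
  set P := pY - pZ
  set Q := qY - qZ
  have hsum : ∑ i ∈ Finset.range n, (Y i - Z i) = P + Q * ω := by
    rw [Finset.sum_sub_distrib, hsumY, hsumZ]
    push_cast [P, Q]
    ring
  have hprod : (∏ i ∈ Finset.range n, Y i) = ∏ i ∈ Finset.range n, Z i ↔ 3 ∣ Q := by
    rw [hprodY, hprodZ, isPrimitiveRoot_omega.zpow_eq_zpow_iff three_ne_zero, Nat.cast_ofNat]
  have hmod := sq_sub_mul_add_sq_emod_nine (show 3 ∣ P + Q by omega)
  refine ⟨P ^ 2 - P * Q + Q ^ 2, ?_, fun h => ?_, fun h => ?_⟩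
  · rw [hsum, Complex.sq_norm, normSq_intCast_add_intCast_mul_omega]
  · rwa [if_pos (hprod.mp h)] at hmod
  · rwa [if_neg (mt hprod.mpr h)] at hmod
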